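/- arXiv:2302.12279 — 5 statements merged into one kernel-verified Lean document; each statement's English description precedes it below -/
import Mathlib

section
/- The minimal energy achievable from ρ by unitaries, P(ρ) := min_U Tr[H U ρ U†], equals Σ_k r_k ε_k where r_1 ≥ r_2 ≥ ... ≥ r_d are the eigenvalues of ρ in decreasing order and ε_1 ≤ ε_2 ≤ ... ≤ ε_d are the eigenvalues of H in increasing order (with multiplicity). -/
open Matrix
open scoped ComplexOrder

private lemma perm_entry {d : ℕ} (p : Equiv.Perm (Fin d)) (i j : Fin d) :
    (p.permMatrix ℂ) i j = if p i = j then 1 else 0 := by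
  simp [Equiv.Perm.permMatrix, PEquiv.toMatrix_apply, Equiv.toPEquiv_apply, Option.mem_def]

private lemma perm_entry_R {d : ℕ} (p : Equiv.Perm (Fin d)) (i j : Fin d) :
    (p.permMatrix ℝ) i j = if p i = j then 1 else 0 := by
  simp [Equiv.Perm.permMatrix, PEquiv.toMatrix_apply, Equiv.toPEquiv_apply, Option.mem_def]

private lemma perm_mem_UG {d : ℕ} (p : Equiv.Perm (Fin d)) :
    (p.permMatrix ℂ) ∈ Matrix.unitaryGroup (Fin d) ℂ := by
  rw [Matrix.mem_unitaryGroup_iff]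
  ext i j
  rw [Matrix.mul_apply]
  simp only [Matrix.star_apply, perm_entry, apply_ite (star : ℂ → ℂ), star_one, star_zero,
    ite_mul, one_mul, zero_mul, Finset.sum_ite_eq, Finset.mem_univ, if_true, Matrix.one_apply]
  by_cases h : i = j
  · simp [h]
  · simp [h]
    exact fun hji => h hji.symm

private lemma trace_formula {d : ℕ} (e r : Fin d → ℝ) (M : Matrix (Fin d) (Fin d) ℂ) :
    (Matrix.trace (Matrix.diagonal (fun i => (e i : ℂ)) * M *
        Matrix.diagonal (fun j => (r j : ℂ)) * Mᴴ)).re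
      = ∑ i, ∑ j, e i * r j * Complex.normSq (M i j) := by
  have hentry : ∀ i, (Matrix.diagonal (fun i => (e i : ℂ)) * M *
      Matrix.diagonal (fun j => (r j : ℂ)) * Mᴴ) i i
      = ∑ j, ((e i * r j * Complex.normSq (M i j) : ℝ) : ℂ) := by
    intro i
    rw [Matrix.mul_apply]
    refine Finset.sum_congr rfl fun j _ => ?_
    rw [Matrix.mul_diagonal, Matrix.diagonal_mul, Matrix.conjTranspose_apply, Complex.star_def]
    push_cast
    linear_combination ((e i : ℂ) * (r j : ℂ)) * Complex.mul_conj (M i j)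
  have : Matrix.trace (Matrix.diagonal (fun i => (e i : ℂ)) * M *
      Matrix.diagonal (fun j => (r j : ℂ)) * Mᴴ)
      = ((∑ i, ∑ j, e i * r j * Complex.normSq (M i j) : ℝ) : ℂ) := by
    rw [Matrix.trace]
    push_cast
    exact Finset.sum_congr rfl fun i _ => by rw [Matrix.diag_apply, hentry i]; push_cast; rfl
  rw [this, Complex.ofReal_re]

private lemma unitary_DS {d : ℕ} {M : Matrix (Fin d) (Fin d) ℂ}
    (hM : M ∈ Matrix.unitaryGroup (Fin d) ℂ) :
    (Matrix.of fun i j => Complex.normSq (M i j)) ∈ doublyStochastic ℝ (Fin d) := by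
  rw [mem_doublyStochastic_iff_sum]
  have h1 : M * star M = 1 := Matrix.mem_unitaryGroup_iff.mp hM
  have h2 : star M * M = 1 := Matrix.mem_unitaryGroup_iff'.mp hM
  refine ⟨fun i j => Complex.normSq_nonneg _, fun i => ?_, fun j => ?_⟩
  · have := congr_fun (congr_fun h1 i) i
    rw [Matrix.mul_apply, Matrix.one_apply_eq] at this
    have h3 : (∑ j, (Complex.normSq (M i j) : ℂ)) = (1 : ℂ) := by
      rw [← this]
      exact Finset.sum_congr rfl fun j _ => by
        rw [Matrix.star_apply, Complex.star_def, Complex.mul_conj]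
    exact_mod_cast h3
  · have := congr_fun (congr_fun h2 j) j
    rw [Matrix.mul_apply, Matrix.one_apply_eq] at this
    have h3 : (∑ i, (Complex.normSq (M i j) : ℂ)) = (1 : ℂ) := by
      rw [← this]
      exact Finset.sum_congr rfl fun i _ => by
        rw [Matrix.star_apply, Complex.star_def, mul_comm, Complex.mul_conj]
    exact_mod_cast h3

/-- Energy of a state `ρ` with respect to Hamiltonian `H`: `Tr[Hρ]` (real part). -/
noncomputable def energy {d : ℕ} (H ρ : Matrix (Fin d) (Fin d) ℂ) : ℝ :=
  (Matrix.trace (H * ρ)).re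

/-- Minimal energy achievable from `ρ` by unitaries (passive-state energy). -/
noncomputable def passiveEnergy {d : ℕ} (H ρ : Matrix (Fin d) (Fin d) ℂ) : ℝ :=
  sInf {x : ℝ | ∃ U ∈ Matrix.unitaryGroup (Fin d) ℂ, x = energy H (U * ρ * Uᴴ)}

/-- Ergotropy: maximal work extractable by unitaries. -/
noncomputable def ergotropy {d : ℕ} (H ρ : Matrix (Fin d) (Fin d) ℂ) : ℝ :=
  energy H ρ - passiveEnergy H ρ

/-- the passive-state energy equals the sum of eigenvalues of `ρ`
sorted decreasingly times eigenvalues of `H` sorted increasingly. -/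
theorem passiveEnergy_eq_sorted_pairing {d : ℕ} (H ρ : Matrix (Fin d) (Fin d) ℂ)
    (hH : H.IsHermitian) (hρ : ρ.PosSemidef) (htr : ρ.trace = 1) :
    passiveEnergy H ρ =
      ∑ k : Fin d,
        (hρ.isHermitian.eigenvalues ∘ Tuple.sort (fun i => -hρ.isHermitian.eigenvalues i)) k *
        (hH.eigenvalues ∘ Tuple.sort hH.eigenvalues) k := by
  classical
  set e : Fin d → ℝ := hH.eigenvalues with he
  set r : Fin d → ℝ := hρ.isHermitian.eigenvalues with hr
  set σe : Equiv.Perm (Fin d) := Tuple.sort e with hσe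
  set τ : Equiv.Perm (Fin d) := Tuple.sort (fun i => -r i) with hτ
  set T : ℝ := ∑ k : Fin d, (r ∘ τ) k * (e ∘ σe) k with hT
  set V : Matrix (Fin d) (Fin d) ℂ := (hH.eigenvectorUnitary : Matrix (Fin d) (Fin d) ℂ) with hV
  set W : Matrix (Fin d) (Fin d) ℂ :=
    (hρ.isHermitian.eigenvectorUnitary : Matrix (Fin d) (Fin d) ℂ) with hW
  have hVmem : V ∈ Matrix.unitaryGroup (Fin d) ℂ := hH.eigenvectorUnitary.2
  have hWmem : W ∈ Matrix.unitaryGroup (Fin d) ℂ := hρ.isHermitian.eigenvectorUnitary.2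
  have hV1 : V * Vᴴ = 1 := by
    rw [← Matrix.star_eq_conjTranspose]; exact Matrix.mem_unitaryGroup_iff.mp hVmem
  have hV2 : Vᴴ * V = 1 := by
    rw [← Matrix.star_eq_conjTranspose]; exact Matrix.mem_unitaryGroup_iff'.mp hVmem
  have hW1 : W * Wᴴ = 1 := by
    rw [← Matrix.star_eq_conjTranspose]; exact Matrix.mem_unitaryGroup_iff.mp hWmem
  have hW2 : Wᴴ * W = 1 := by
    rw [← Matrix.star_eq_conjTranspose]; exact Matrix.mem_unitaryGroup_iff'.mp hWmem
  set E : Matrix (Fin d) (Fin d) ℂ := Matrix.diagonal (fun i => (e i : ℂ)) with hE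
  set R : Matrix (Fin d) (Fin d) ℂ := Matrix.diagonal (fun i => (r i : ℂ)) with hR
  have hHspec : H = V * E * Vᴴ := hH.spectral_theorem
  have hρspec : ρ = W * R * Wᴴ := hρ.isHermitian.spectral_theorem
  have cV : ∀ A : Matrix (Fin d) (Fin d) ℂ, A * Vᴴ * V = A := fun A => by
    rw [Matrix.mul_assoc, hV2, Matrix.mul_one]
  have cW : ∀ A : Matrix (Fin d) (Fin d) ℂ, A * Wᴴ * W = A := fun A => by
    rw [Matrix.mul_assoc, hW2, Matrix.mul_one]
  have cW' : ∀ A : Matrix (Fin d) (Fin d) ℂ, A * W * Wᴴ = A := fun A => by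
    rw [Matrix.mul_assoc, hW1, Matrix.mul_one]
  -- key computation
  have key : ∀ M : Matrix (Fin d) (Fin d) ℂ,
      energy H ((V * M * Wᴴ) * ρ * (V * M * Wᴴ)ᴴ)
        = ∑ i, ∑ j, e i * r j * Complex.normSq (M i j) := by
    intro M
    have hmul : H * ((V * M * Wᴴ) * ρ * (V * M * Wᴴ)ᴴ) = V * (E * M * R * Mᴴ) * Vᴴ := by
      rw [hHspec, hρspec]
      simp only [Matrix.conjTranspose_mul, Matrix.conjTranspose_conjTranspose]
      simp only [← Matrix.mul_assoc]
      rw [cV, cW, cW]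
    simp only [energy]
    rw [hmul, Matrix.trace_mul_comm, ← Matrix.mul_assoc, hV2, Matrix.one_mul]
    exact trace_formula e r M
  -- the attainable-energy set, rewritten
  have hset : {x : ℝ | ∃ U ∈ Matrix.unitaryGroup (Fin d) ℂ, x = energy H (U * ρ * Uᴴ)}
      = {x : ℝ | ∃ M ∈ Matrix.unitaryGroup (Fin d) ℂ,
          x = ∑ i, ∑ j, e i * r j * Complex.normSq (M i j)} := by
    ext x
    simp only [Set.mem_setOf_eq]
    constructor
    · rintro ⟨U, hU, rfl⟩
      refine ⟨Vᴴ * U * W, ?_, ?_⟩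
      · rw [← Matrix.star_eq_conjTranspose]
        exact mul_mem (mul_mem (Unitary.star_mem hVmem) hU) hWmem
      · have hUeq : V * (Vᴴ * U * W) * Wᴴ = U := by
          simp only [← Matrix.mul_assoc]
          rw [hV1, Matrix.one_mul, cW']
        rw [← key (Vᴴ * U * W), hUeq]
    · rintro ⟨M, hM, rfl⟩
      refine ⟨V * M * Wᴴ, ?_, (key M).symm⟩
      rw [← Matrix.star_eq_conjTranspose]
      exact mul_mem (mul_mem hVmem hM) (Unitary.star_mem hWmem)
  -- rearrangement: every permutation pairing dominates T
  have hperm : ∀ s : Equiv.Perm (Fin d), T ≤ ∑ i, e i * r (s i) := by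
    intro s
    have hmono : Monotone (e ∘ σe) := Tuple.monotone_sort e
    have hanti : Antitone (r ∘ τ) := fun i j hij => by
      have h := Tuple.monotone_sort (fun i => -r i) hij
      simpa using h
    have hav : Antivary (e ∘ σe) (r ∘ τ) := hmono.antivary hanti
    have h1 := hav.sum_smul_le_sum_smul_comp_perm (σ := (σe.trans s).trans τ.symm)
    calc T = ∑ k, (e ∘ σe) k • (r ∘ τ) k := by
          rw [hT]; exact Finset.sum_congr rfl fun k _ => by
            simp [smul_eq_mul, mul_comm]
      _ ≤ ∑ k, (e ∘ σe) k • (r ∘ τ) (((σe.trans s).trans τ.symm) k) := h1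
      _ = ∑ k, e (σe k) * r (s (σe k)) := Finset.sum_congr rfl fun k _ => by
          simp [smul_eq_mul, Equiv.trans_apply]
      _ = ∑ i, e i * r (s i) := Equiv.sum_comp σe (fun i => e i * r (s i))
  -- lower bound for unitaries via Birkhoff
  have hlb : ∀ M ∈ Matrix.unitaryGroup (Fin d) ℂ,
      T ≤ ∑ i, ∑ j, e i * r j * Complex.normSq (M i j) := by
    intro M hM
    obtain ⟨w, hw0, hw1, hw2⟩ := exists_eq_sum_perm_of_mem_doublyStochastic (unitary_DS hM)
    have hB : ∀ i j, Complex.normSq (M i j)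
        = ∑ s : Equiv.Perm (Fin d), w s * (s.permMatrix ℝ) i j := by
      intro i j
      have h := congr_fun (congr_fun hw2 i) j
      simp only [Matrix.sum_apply, Matrix.smul_apply, smul_eq_mul, Matrix.of_apply] at h
      exact h.symm
    have hexp : ∑ i, ∑ j, e i * r j * Complex.normSq (M i j)
        = ∑ s : Equiv.Perm (Fin d), w s * ∑ i, e i * r (s i) := by
      have h1 : ∀ i, ∑ j, e i * r j * Complex.normSq (M i j)
          = ∑ s : Equiv.Perm (Fin d), w s * (e i * r (s i)) := by
        intro i
        simp only [hB, Finset.mul_sum, perm_entry_R, mul_ite, mul_one, mul_zero]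
        rw [Finset.sum_comm]
        refine Finset.sum_congr rfl fun s _ => ?_
        rw [Finset.sum_ite_eq]
        simp only [Finset.mem_univ, if_true]
        ring
      calc ∑ i, ∑ j, e i * r j * Complex.normSq (M i j)
          = ∑ i, ∑ s : Equiv.Perm (Fin d), w s * (e i * r (s i)) :=
            Finset.sum_congr rfl fun i _ => h1 i
        _ = ∑ s : Equiv.Perm (Fin d), ∑ i, w s * (e i * r (s i)) := Finset.sum_comm
        _ = ∑ s : Equiv.Perm (Fin d), w s * ∑ i, e i * r (s i) := by
            simp [Finset.mul_sum]
    rw [hexp]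
    calc T = ∑ s : Equiv.Perm (Fin d), w s * T := by
          rw [← Finset.sum_mul, hw1, one_mul]
      _ ≤ ∑ s : Equiv.Perm (Fin d), w s * ∑ i, e i * r (s i) :=
          Finset.sum_le_sum fun s _ => mul_le_mul_of_nonneg_left (hperm s) (hw0 s)
  -- achievability
  set p : Equiv.Perm (Fin d) := σe.symm.trans τ with hp
  have hach : ∑ i, ∑ j, e i * r j *
      Complex.normSq ((p.permMatrix ℂ) i j) = T := by
    have h1 : ∀ i, ∑ j, e i * r j * Complex.normSq ((p.permMatrix ℂ) i j)
        = e i * r (p i) := by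
      intro i
      simp only [perm_entry, Equiv.trans_apply, apply_ite Complex.normSq,
        Complex.normSq_one, Complex.normSq_zero, mul_ite, mul_one, mul_zero]
      rw [Finset.sum_ite_eq]
      simp
    calc ∑ i, ∑ j, e i * r j * Complex.normSq ((p.permMatrix ℂ) i j)
        = ∑ i, e i * r (p i) := Finset.sum_congr rfl fun i _ => h1 i
      _ = ∑ k, e (σe k) * r (p (σe k)) := (Equiv.sum_comp σe (fun i => e i * r (p i))).symm
      _ = T := by
          rw [hT]
          refine Finset.sum_congr rfl fun k _ => ?_
          rw [hp]
          simp [Equiv.trans_apply, Equiv.symm_apply_apply, mul_comm]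
  -- conclude
  show passiveEnergy H ρ = T
  unfold passiveEnergy
  rw [hset]
  have hmemT : T ∈ {x : ℝ | ∃ M ∈ Matrix.unitaryGroup (Fin d) ℂ,
      x = ∑ i, ∑ j, e i * r j * Complex.normSq (M i j)} :=
    ⟨p.permMatrix ℂ, perm_mem_UG _, hach.symm⟩
  refine le_antisymm (csInf_le ⟨T, ?_⟩ hmemT) (le_csInf ⟨T, hmemT⟩ ?_)
  · rintro x ⟨M, hM, rfl⟩; exact hlb M hM
  · rintro x ⟨M, hM, rfl⟩; exact hlb M hM
end

section
/- A density matrix ρ has zero ergotropy, E(ρ) = 0, if and only if ρ is passive: ρ commutes with H and, writing the common eigenbasis with H-eigenvalues ε_1 ≤ ... ≤ ε_d, the corresponding populations of ρ satisfy r_1 ≥ ... ≥ r_d (no population inversion; for degenerate levels any ordering is allowed). -/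
open Matrix
open scoped ComplexOrder

/-!
Diagonalise `H = V diag(e) V†` with `e` increasing and `ρ = W diag(r) W†` with `r` decreasing.
For a unitary `U`, the energy of `U ρ U†` is `∑ e_i r_j S_ij` with `S_ij = |(V† U W)_ij|²`
doubly stochastic, so by Birkhoff's theorem and the rearrangement inequality the passive energy
is `∑ e_i r_i`, and zero ergotropy means that `ρ` minimises the energy on its unitary orbit.
Then `S` minimises `∑ e_i r_j S_ij` over all doubly stochastic matrices; moving mass between
entries shows that `S_ij, S_i'j' > 0` and `e_i < e_i'` force `r_j ≥ r_j'`, which makes `ρ` commute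
with `H`. In a common eigenbasis, minimality under transpositions orders the populations
against the energies.
-/

open Finset

section DoublyStochastic

variable {n : Type*} [Fintype n] [DecidableEq n]

theorem sum_mul_le_sum_sum_mul_of_mem_doublyStochastic {e r : n → ℝ} (her : Antivary e r)
    {S : Matrix n n ℝ} (hS : S ∈ doublyStochastic ℝ n) :
    ∑ i, e i * r i ≤ ∑ i, ∑ j, e i * r j * S i j := by
  have hlin : IsLinearMap ℝ fun T : Matrix n n ℝ => ∑ i, ∑ j, e i * r j * T i j :=
    ⟨fun _ _ => by simp only [Matrix.add_apply, mul_add, sum_add_distrib],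
     fun _ _ => by
      simp only [Matrix.smul_apply, smul_eq_mul, mul_sum]
      exact sum_congr rfl fun _ _ => sum_congr rfl fun _ _ => by ring⟩
  rw [← SetLike.mem_coe, doublyStochastic_eq_convexHull_permMatrix] at hS
  refine convexHull_min ?_ (convex_halfSpace_ge hlin _) hS
  rintro _ ⟨σ, rfl⟩
  simpa [PEquiv.toMatrix_apply, eq_comm] using her.sum_mul_le_sum_mul_comp_perm (σ := σ)

theorem le_of_isMinOn_doublyStochastic {e r : n → ℝ} {S : Matrix n n ℝ}
    (hS : S ∈ doublyStochastic ℝ n)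
    (hmin : IsMinOn (fun T : Matrix n n ℝ => ∑ i, ∑ j, e i * r j * T i j)
      (doublyStochastic ℝ n) S)
    {i i' j j' : n} (he : e i < e i') (hij : 0 < S i j) (hij' : 0 < S i' j') : r j' ≤ r j := by
  by_contra! hr
  have hi : i ≠ i' := fun h => he.ne (congrArg e h)
  have hj : j ≠ j' := fun h => hr.ne (congrArg r h)
  obtain ⟨ε, hε0, hεij, hεij'⟩ : ∃ ε : ℝ, 0 < ε ∧ ε ≤ S i j ∧ ε ≤ S i' j' :=
    ⟨_, lt_min hij hij', min_le_left _ _, min_le_right _ _⟩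
  -- moving mass `ε` from `(i, j), (i', j')` to `(i, j'), (i', j)` lowers the objective
  set T := S + single i j' ε + single i' j ε - single i j ε - single i' j' ε with hT
  have hTmem : T ∈ doublyStochastic ℝ n := by
    rw [mem_doublyStochastic_iff_sum]
    refine ⟨fun k l => ?_, fun k => ?_, fun l => ?_⟩
    · have := nonneg_of_mem_doublyStochastic hS (i := k) (j := l)
      simp only [hT, Matrix.sub_apply, Matrix.add_apply, single_apply]
      split_ifs <;> grind
    · simp [hT, sum_add_distrib, sum_sub_distrib, single_apply, ite_and,
        sum_row_of_mem_doublyStochastic hS]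
      split_ifs <;> simp_all
    · simp [hT, sum_add_distrib, sum_sub_distrib, single_apply, ite_and,
        sum_col_of_mem_doublyStochastic hS]
  have hval : ∑ a, ∑ b, e a * r b * T a b
      = ∑ a, ∑ b, e a * r b * S a b - ε * ((e i' - e i) * (r j' - r j)) := by
    simp [hT, mul_add, mul_sub, sum_add_distrib, sum_sub_distrib, single_apply, ite_and]
    ring
  have hST := hmin hTmem
  simp only [Set.mem_ofPred_eq] at hST
  nlinarith [mul_pos hε0 (mul_pos (sub_pos.2 he) (sub_pos.2 hr))]

theorem normSq_mem_doublyStochastic {U : Matrix n n ℂ} (hU : U ∈ unitaryGroup n ℂ) :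
    (of fun i j => Complex.normSq (U i j)) ∈ doublyStochastic ℝ n := by
  refine mem_doublyStochastic_iff_sum.2 ⟨fun i j => Complex.normSq_nonneg _, fun i => ?_,
    fun j => ?_⟩
  · have h := congrFun₂ (mem_unitaryGroup_iff.mp hU) i i
    simp only [mul_apply, star_apply, Complex.star_def, Complex.mul_conj, one_apply_eq] at h
    exact_mod_cast h
  · have h := congrFun₂ (mem_unitaryGroup_iff'.mp hU) j j
    simp only [mul_apply, star_apply, Complex.star_def, mul_comm (starRingEnd ℂ _),
      Complex.mul_conj, one_apply_eq] at h
    exact_mod_cast h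

end DoublyStochastic

namespace Matrix

variable {𝕜 : Type*} [RCLike 𝕜] {n : Type*} [Fintype n] [DecidableEq n]

theorem eq_mul_diagonal_mul_conjTranspose_of_mulVec_eq {A U : Matrix n n 𝕜}
    (hU : U ∈ unitaryGroup n 𝕜) {μ : n → 𝕜} (h : ∀ k, A *ᵥ Uᵀ k = μ k • Uᵀ k) :
    A = U * diagonal μ * Uᴴ := by
  have hAU : A * U = U * diagonal μ := by
    ext i k
    rw [mul_diagonal]
    simpa [mulVec, dotProduct, mul_apply, mul_comm] using congrFun (h k) i
  rw [← hAU, Matrix.mul_assoc, ← star_eq_conjTranspose, mem_unitaryGroup_iff.mp hU, mul_one]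

theorem IsHermitian.eq_mul_diagonal_re_mul_conjTranspose {A U : Matrix n n 𝕜} (hA : A.IsHermitian)
    (hU : U ∈ unitaryGroup n 𝕜) {μ : n → 𝕜} (h : A = U * diagonal μ * Uᴴ) :
    A = U * diagonal (fun i => ((RCLike.re (μ i) : ℝ) : 𝕜)) * Uᴴ := by
  have hdiag : diagonal μ = Uᴴ * A * U := by
    rw [h, ← star_eq_conjTranspose]
    simp only [Matrix.mul_assoc, Unitary.star_mul_self_of_mem hU]
    rw [← Matrix.mul_assoc, Unitary.star_mul_self_of_mem hU, one_mul, mul_one]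
  have hherm : (diagonal μ).IsHermitian := hdiag ▸ isHermitian_conjTranspose_mul_mul U hA
  have hμ : (fun i => ((RCLike.re (μ i) : ℝ) : 𝕜)) = μ := by
    funext i
    have := congrFun₂ hherm i i
    simp only [conjTranspose_apply, diagonal_apply_eq] at this
    exact RCLike.conj_eq_iff_re.mp this
  rw [hμ]; exact h

theorem IsHermitian.exists_unitary_diagonal {A : Matrix n n 𝕜} (hA : A.IsHermitian) :
    ∃ U ∈ unitaryGroup n 𝕜, ∃ a : n → ℝ, A = U * diagonal (fun i => (a i : 𝕜)) * Uᴴ :=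
  ⟨hA.eigenvectorUnitary, hA.eigenvectorUnitary.2, hA.eigenvalues, by
    simpa [Unitary.conjStarAlgAut_apply, star_eq_conjTranspose, Function.comp_def]
      using hA.spectral_theorem⟩

open _root_.Module End in
theorem IsHermitian.exists_unitary_mulVec_eq_smul_of_commute {A B : Matrix n n 𝕜}
    (hA : A.IsHermitian) (hB : B.IsHermitian) (hAB : Commute A B) :
    ∃ U ∈ unitaryGroup n 𝕜, ∃ μ ν : n → 𝕜,
      (∀ k, A *ᵥ Uᵀ k = μ k • Uᵀ k) ∧ (∀ k, B *ᵥ Uᵀ k = ν k • Uᵀ k) := by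
  have hTA := isSymmetric_toEuclideanLin_iff.mpr hA
  have hTB := isSymmetric_toEuclideanLin_iff.mpr hB
  have hT : Commute (toEuclideanLin A) (toEuclideanLin B) := hAB.map (toLpLinAlgEquiv 2)
  have hI := hTA.directSum_isInternal_of_commute hTB hT
  have hO := hTA.orthogonalFamily_eigenspace_inf_eigenspace hTB
  let V := fun i : 𝕜 × 𝕜 => eigenspace (toEuclideanLin A) i.2 ⊓ eigenspace (toEuclideanLin B) i.1
  let _ := hI.submodule_iSupIndep.fintypeNeBotOfFiniteDimensional
  have hI' : DirectSum.IsInternal fun i : {i // V i ≠ ⊥} => V i :=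
    DirectSum.isInternal_ne_bot_iff.mpr hI
  have hO' := hO.comp (Subtype.val_injective (p := fun i => V i ≠ ⊥))
  have hn : finrank 𝕜 (EuclideanSpace 𝕜 n) = Fintype.card n := finrank_euclideanSpace
  let b := (hI'.subordinateOrthonormalBasis hn hO').reindex (Fintype.equivFin n).symm
  let idx k := (hI'.subordinateOrthonormalBasisIndex hn (Fintype.equivFin n k) hO').val
  have hb : ∀ k, b k ∈ V (idx k) := fun k => by
    simpa [b] using hI'.subordinateOrthonormalBasis_subordinate hn (Fintype.equivFin n k) hO'
  refine ⟨(EuclideanSpace.basisFun n 𝕜).toBasis.toMatrix b.toBasis,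
    (EuclideanSpace.basisFun n 𝕜).toMatrix_orthonormalBasis_mem_unitary b,
    fun k => (idx k).2, fun k => (idx k).1, fun k => ?_, fun k => ?_⟩
  · exact congrArg WithLp.ofLp (mem_eigenspace_iff.mp (hb k).1)
  · exact congrArg WithLp.ofLp (mem_eigenspace_iff.mp (hb k).2)

theorem IsHermitian.exists_unitary_diagonal_of_commute {A B : Matrix n n 𝕜}
    (hA : A.IsHermitian) (hB : B.IsHermitian) (hAB : Commute A B) :
    ∃ U ∈ unitaryGroup n 𝕜, ∃ a b : n → ℝ,
      A = U * diagonal (fun i => (a i : 𝕜)) * Uᴴ ∧ B = U * diagonal (fun i => (b i : 𝕜)) * Uᴴ := by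
  obtain ⟨U, hU, μ, ν, hμ, hν⟩ := hA.exists_unitary_mulVec_eq_smul_of_commute hB hAB
  exact ⟨U, hU, _, _,
    hA.eq_mul_diagonal_re_mul_conjTranspose hU
      (eq_mul_diagonal_mul_conjTranspose_of_mulVec_eq hU hμ),
    hB.eq_mul_diagonal_re_mul_conjTranspose hU
      (eq_mul_diagonal_mul_conjTranspose_of_mulVec_eq hU hν)⟩

theorem permMatrix_mul_diagonal_mul_conjTranspose (σ : Equiv.Perm n) (a : n → 𝕜) :
    σ.permMatrix 𝕜 * diagonal a * (σ.permMatrix 𝕜)ᴴ = diagonal (a ∘ σ) := by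
  rw [conjTranspose_permMatrix, Equiv.Perm.permMatrix, Equiv.Perm.permMatrix,
    PEquiv.toMatrix_toPEquiv_mul, PEquiv.mul_toMatrix_toPEquiv, submatrix_submatrix]
  exact submatrix_diagonal_equiv a σ

theorem permMatrix_mem_unitaryGroup (σ : Equiv.Perm n) : σ.permMatrix 𝕜 ∈ unitaryGroup n 𝕜 := by
  rw [mem_unitaryGroup_iff, star_eq_conjTranspose, conjTranspose_permMatrix, ← permMatrix_mul,
    inv_mul_cancel, permMatrix_one]

theorem mul_diagonal_mul_conjTranspose_eq_comp_perm (U : Matrix n n 𝕜) (a : n → 𝕜)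
    (σ : Equiv.Perm n) :
    U * diagonal a * Uᴴ = (U * σ⁻¹.permMatrix 𝕜) * diagonal (a ∘ σ) * (U * σ⁻¹.permMatrix 𝕜)ᴴ := by
  have h : diagonal a = σ⁻¹.permMatrix 𝕜 * diagonal (a ∘ σ) * (σ⁻¹.permMatrix 𝕜)ᴴ := by
    rw [permMatrix_mul_diagonal_mul_conjTranspose, Function.comp_assoc, ← Equiv.Perm.coe_mul,
      mul_inv_cancel, Equiv.Perm.coe_one, Function.comp_id]
  rw [h]
  simp only [conjTranspose_mul, Matrix.mul_assoc]

theorem commute_diagonal_mul_diagonal_mul_conjTranspose {K : Matrix n n 𝕜}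
    (hK : K ∈ unitaryGroup n 𝕜) {e r : n → ℝ}
    (h : ∀ i i' j j', e i < e i' → K i j ≠ 0 → K i' j' ≠ 0 → r j' ≤ r j) :
    Commute (diagonal fun i => (e i : 𝕜)) (K * diagonal (fun j => (r j : 𝕜)) * Kᴴ) := by
  have hconst : ∀ i i', e i ≠ e i' → ∃ c : 𝕜, ∀ j, K i j ≠ 0 → K i' j ≠ 0 → (r j : 𝕜) = c := by
    intro i i' hne
    by_cases h₀ : ∃ j₀, K i j₀ ≠ 0 ∧ K i' j₀ ≠ 0
    · obtain ⟨j₀, hj₀, hj₀'⟩ := h₀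
      refine ⟨r j₀, fun j hj hj' => congrArg _ ?_⟩
      rcases hne.lt_or_gt with hlt | hgt
      · exact le_antisymm (h _ _ _ _ hlt hj₀ hj') (h _ _ _ _ hlt hj hj₀')
      · exact le_antisymm (h _ _ _ _ hgt hj₀' hj) (h _ _ _ _ hgt hj' hj₀)
    · push Not at h₀
      exact ⟨0, fun j hj hj' => absurd (h₀ j hj) hj'⟩
  ext i i'
  rw [diagonal_mul, mul_diagonal]
  by_cases he : e i = e i'
  · rw [he, mul_comm]
  -- `r` is constant on the common support of rows `i` and `i'`, where `K` has orthogonal rows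
  obtain ⟨c, hc⟩ := hconst i i' he
  have hii' : i ≠ i' := fun h => he (congrArg e h)
  have hzero : (K * diagonal (fun j => (r j : 𝕜)) * Kᴴ) i i' = 0 :=
    calc _ = ∑ j, c * (K i j * star (K i' j)) := by
          rw [mul_apply]
          refine Finset.sum_congr rfl fun j _ => ?_
          rw [mul_diagonal, conjTranspose_apply]
          by_cases hj : K i j = 0
          · simp [hj]
          by_cases hj' : K i' j = 0
          · simp [hj']
          rw [hc j hj hj']
          ring
      _ = c * (K * star K) i i' := by simp only [mul_apply, star_apply, mul_sum]
      _ = 0 := by rw [mem_unitaryGroup_iff.mp hK, one_apply_ne hii', mul_zero]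
  rw [hzero, zero_mul, mul_zero]

section Sorting

variable {d : ℕ}

theorem IsHermitian.exists_unitary_diagonal_monotone {A : Matrix (Fin d) (Fin d) 𝕜}
    (hA : A.IsHermitian) :
    ∃ U ∈ unitaryGroup (Fin d) 𝕜, ∃ a : Fin d → ℝ, Monotone a ∧
      A = U * diagonal (fun i => (a i : 𝕜)) * Uᴴ := by
  obtain ⟨U, hU, a, rfl⟩ := hA.exists_unitary_diagonal
  exact ⟨_, mul_mem hU (permMatrix_mem_unitaryGroup _), _, Tuple.monotone_sort a,
    mul_diagonal_mul_conjTranspose_eq_comp_perm U _ (Tuple.sort a)⟩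

theorem IsHermitian.exists_unitary_diagonal_antitone {A : Matrix (Fin d) (Fin d) 𝕜}
    (hA : A.IsHermitian) :
    ∃ U ∈ unitaryGroup (Fin d) 𝕜, ∃ a : Fin d → ℝ, Antitone a ∧
      A = U * diagonal (fun i => (a i : 𝕜)) * Uᴴ := by
  obtain ⟨U, hU, a, rfl⟩ := hA.exists_unitary_diagonal
  exact ⟨_, mul_mem hU (permMatrix_mem_unitaryGroup _), _,
    monotone_toDual_comp_iff.mp (Tuple.monotone_sort (OrderDual.toDual ∘ a)),
    mul_diagonal_mul_conjTranspose_eq_comp_perm U _ (Tuple.sort (OrderDual.toDual ∘ a))⟩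

/-- Sorting lexicographically by `(e, -r)` makes `e` monotone, and `Antivary r e` makes `r`
antitone across distinct values of `e`. -/
theorem exists_unitary_diagonal_monotone_antitone_of_antivary {U : Matrix (Fin d) (Fin d) 𝕜}
    (hU : U ∈ unitaryGroup (Fin d) 𝕜) {e r : Fin d → ℝ} (h : Antivary r e) :
    ∃ V ∈ unitaryGroup (Fin d) 𝕜, ∃ e' r' : Fin d → ℝ, Monotone e' ∧ Antitone r' ∧
      U * diagonal (fun i => (e i : 𝕜)) * Uᴴ = V * diagonal (fun i => (e' i : 𝕜)) * Vᴴ ∧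
      U * diagonal (fun i => (r i : 𝕜)) * Uᴴ = V * diagonal (fun i => (r' i : 𝕜)) * Vᴴ := by
  set σ := Tuple.sort fun i => toLex (e i, OrderDual.toDual (r i))
  have hσ := Tuple.monotone_sort fun i => toLex (e i, OrderDual.toDual (r i))
  refine ⟨_, mul_mem hU (permMatrix_mem_unitaryGroup σ⁻¹), e ∘ σ, r ∘ σ, fun i j hij => ?_,
    fun i j hij => ?_, mul_diagonal_mul_conjTranspose_eq_comp_perm U _ σ,
    mul_diagonal_mul_conjTranspose_eq_comp_perm U _ σ⟩
  · obtain h1 | ⟨h1, -⟩ := Prod.Lex.le_iff.mp (hσ hij)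
    exacts [h1.le, h1.le]
  · obtain h1 | ⟨-, h2⟩ := Prod.Lex.le_iff.mp (hσ hij)
    exacts [h h1, h2]

end Sorting

end Matrix

section Energy

variable {d : ℕ}

theorem energy_conj {V : Matrix (Fin d) (Fin d) ℂ} (hV : V ∈ unitaryGroup (Fin d) ℂ)
    (A B : Matrix (Fin d) (Fin d) ℂ) : energy (V * A * Vᴴ) (V * B * Vᴴ) = energy A B := by
  have hVV : Vᴴ * V = 1 := mem_unitaryGroup_iff'.mp hV
  have h : V * A * Vᴴ * (V * B * Vᴴ) = V * (A * B) * Vᴴ := by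
    simp only [Matrix.mul_assoc]
    rw [← Matrix.mul_assoc Vᴴ V, hVV, one_mul]
  rw [energy, energy, h, trace_mul_cycle, hVV, one_mul]

theorem energy_diagonal_diagonal (e r : Fin d → ℝ) :
    energy (diagonal fun i => (e i : ℂ)) (diagonal fun i => (r i : ℂ)) = ∑ i, e i * r i := by
  simp [energy, trace, diagonal_mul_diagonal, ← Complex.ofReal_mul]

theorem energy_diagonal_mul_diagonal_mul_conjTranspose (K : Matrix (Fin d) (Fin d) ℂ)
    (e r : Fin d → ℝ) :
    energy (diagonal fun i => (e i : ℂ)) (K * diagonal (fun j => (r j : ℂ)) * Kᴴ)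
      = ∑ i, ∑ j, e i * r j * Complex.normSq (K i j) := by
  simp only [energy, trace, diag_apply, diagonal_mul, Complex.re_sum]
  refine Finset.sum_congr rfl fun i _ => ?_
  rw [mul_apply, mul_sum, Complex.re_sum]
  refine Finset.sum_congr rfl fun j _ => ?_
  rw [mul_diagonal, conjTranspose_apply, Complex.star_def, show (e i : ℂ) * (K i j * r j * (starRingEnd ℂ) (K i j))
      = ((e i * r j : ℝ) : ℂ) * (K i j * (starRingEnd ℂ) (K i j)) by push_cast; ring,
    Complex.mul_conj, ← Complex.ofReal_mul, Complex.ofReal_re]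

theorem energy_conj_eq_sum_normSq {V W : Matrix (Fin d) (Fin d) ℂ}
    (hV : V ∈ unitaryGroup (Fin d) ℂ) (X : Matrix (Fin d) (Fin d) ℂ) (e r : Fin d → ℝ) :
    energy (V * diagonal (fun i => (e i : ℂ)) * Vᴴ)
        (X * (W * diagonal (fun j => (r j : ℂ)) * Wᴴ) * Xᴴ)
      = ∑ i, ∑ j, e i * r j * Complex.normSq ((Vᴴ * X * W) i j) := by
  have h : X * (W * diagonal (fun j => (r j : ℂ)) * Wᴴ) * Xᴴ
      = V * ((Vᴴ * X * W) * diagonal (fun j => (r j : ℂ)) * (Vᴴ * X * W)ᴴ) * Vᴴ :=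
    calc _ = (V * Vᴴ) * (X * (W * diagonal (fun j => (r j : ℂ)) * Wᴴ) * Xᴴ) * (V * Vᴴ) := by
          rw [show V * Vᴴ = 1 from mem_unitaryGroup_iff.mp hV, one_mul, mul_one]
      _ = _ := by simp only [conjTranspose_mul, conjTranspose_conjTranspose, Matrix.mul_assoc]
  rw [h, energy_conj hV, energy_diagonal_mul_diagonal_mul_conjTranspose]

theorem isLeast_energy_orbit {H ρ V W : Matrix (Fin d) (Fin d) ℂ}
    (hV : V ∈ unitaryGroup (Fin d) ℂ) (hW : W ∈ unitaryGroup (Fin d) ℂ) {e r : Fin d → ℝ}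
    (her : Antivary e r) (hH : H = V * diagonal (fun i => (e i : ℂ)) * Vᴴ)
    (hρ : ρ = W * diagonal (fun i => (r i : ℂ)) * Wᴴ) :
    IsLeast {x | ∃ U ∈ unitaryGroup (Fin d) ℂ, x = energy H (U * ρ * Uᴴ)} (∑ i, e i * r i) := by
  refine ⟨⟨V * Wᴴ, mul_mem hV (Unitary.star_mem hW), ?_⟩, ?_⟩
  · have hWW : Wᴴ * W = 1 := mem_unitaryGroup_iff'.mp hW
    have h : V * Wᴴ * ρ * (V * Wᴴ)ᴴ = V * diagonal (fun i => (r i : ℂ)) * Vᴴ :=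
      calc _ = V * (Wᴴ * W) * diagonal (fun i => (r i : ℂ)) * (Wᴴ * W) * Vᴴ := by
            simp only [hρ, conjTranspose_mul, conjTranspose_conjTranspose, Matrix.mul_assoc]
        _ = _ := by rw [hWW, mul_one, mul_one]
    rw [h, hH, energy_conj hV, energy_diagonal_diagonal]
  · rintro _ ⟨U, hU, rfl⟩
    rw [hH, hρ, energy_conj_eq_sum_normSq hV]
    exact sum_mul_le_sum_sum_mul_of_mem_doublyStochastic her
      (normSq_mem_doublyStochastic (mul_mem (mul_mem (Unitary.star_mem hV) hU) hW))

theorem ergotropy_eq_zero_iff_forall_energy_le {H ρ : Matrix (Fin d) (Fin d) ℂ}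
    (hH : H.IsHermitian) (hρ : ρ.IsHermitian) :
    ergotropy H ρ = 0 ↔ ∀ U ∈ unitaryGroup (Fin d) ℂ, energy H ρ ≤ energy H (U * ρ * Uᴴ) := by
  obtain ⟨V, hV, e, he, hHV⟩ := hH.exists_unitary_diagonal_monotone
  obtain ⟨W, hW, r, hr, hρW⟩ := hρ.exists_unitary_diagonal_antitone
  have hL := isLeast_energy_orbit hV hW (he.antivary hr) hHV hρW
  rw [ergotropy, passiveEnergy, hL.csInf_eq, sub_eq_zero]
  refine ⟨fun h U hU => h ▸ hL.2 ⟨U, hU, rfl⟩,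
    fun h => le_antisymm ?_ (hL.2 ⟨1, one_mem _, by simp⟩)⟩
  obtain ⟨U, hU, hUeq⟩ := hL.1
  exact hUeq ▸ h U hU

theorem commute_of_forall_energy_le {H ρ : Matrix (Fin d) (Fin d) ℂ}
    (hH : H.IsHermitian) (hρ : ρ.IsHermitian)
    (hmin : ∀ U ∈ unitaryGroup (Fin d) ℂ, energy H ρ ≤ energy H (U * ρ * Uᴴ)) :
    Commute H ρ := by
  obtain ⟨V, hV, e, he, hHV⟩ : ∃ V ∈ unitaryGroup (Fin d) ℂ, ∃ e : Fin d → ℝ, Monotone e ∧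
      H = V * diagonal (fun i => (e i : ℂ)) * Vᴴ := hH.exists_unitary_diagonal_monotone
  obtain ⟨W, hW, r, hr, hρW⟩ : ∃ W ∈ unitaryGroup (Fin d) ℂ, ∃ r : Fin d → ℝ, Antitone r ∧
      ρ = W * diagonal (fun i => (r i : ℂ)) * Wᴴ := hρ.exists_unitary_diagonal_antitone
  have hK : Vᴴ * W ∈ unitaryGroup (Fin d) ℂ := mul_mem (Unitary.star_mem hV) hW
  have hS := normSq_mem_doublyStochastic hK
  have hρV : ρ = V * ((Vᴴ * W) * diagonal (fun j => (r j : ℂ)) * (Vᴴ * W)ᴴ) * Vᴴ :=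
    calc ρ = (V * Vᴴ) * ρ * (V * Vᴴ) := by
          rw [show V * Vᴴ = 1 from mem_unitaryGroup_iff.mp hV, one_mul, mul_one]
      _ = _ := by simp only [hρW, conjTranspose_mul, conjTranspose_conjTranspose, Matrix.mul_assoc]
  have hSmin : IsMinOn (fun T : Matrix (Fin d) (Fin d) ℝ => ∑ i, ∑ j, e i * r j * T i j)
      (doublyStochastic ℝ (Fin d)) (of fun i j => Complex.normSq ((Vᴴ * W) i j)) := by
    intro T hT
    obtain ⟨U, hU, hUeq⟩ := (isLeast_energy_orbit hV hW (he.antivary hr) hHV hρW).1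
    calc ∑ i, ∑ j, e i * r j * Complex.normSq ((Vᴴ * W) i j) = energy H ρ := by
          rw [hHV, hρV, energy_conj hV, energy_diagonal_mul_diagonal_mul_conjTranspose]
      _ ≤ ∑ i, e i * r i := hUeq ▸ hmin U hU
      _ ≤ _ := sum_mul_le_sum_sum_mul_of_mem_doublyStochastic (he.antivary hr) hT
  have hcomm := commute_diagonal_mul_diagonal_mul_conjTranspose hK
    fun i i' j j' hlt hj hj' => le_of_isMinOn_doublyStochastic hS hSmin hlt
      (Complex.normSq_pos.2 hj) (Complex.normSq_pos.2 hj')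
  have hconj := hcomm.map (Unitary.conjStarAlgAut ℂ _ ⟨V, hV⟩)
  simp only [Unitary.conjStarAlgAut_apply] at hconj
  rw [hHV, hρV]
  exact hconj

theorem antivary_of_forall_energy_le {H ρ U : Matrix (Fin d) (Fin d) ℂ}
    (hU : U ∈ unitaryGroup (Fin d) ℂ) {e r : Fin d → ℝ}
    (hH : H = U * diagonal (fun i => (e i : ℂ)) * Uᴴ)
    (hρ : ρ = U * diagonal (fun i => (r i : ℂ)) * Uᴴ)
    (hmin : ∀ X ∈ unitaryGroup (Fin d) ℂ, energy H ρ ≤ energy H (X * ρ * Xᴴ)) :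
    Antivary r e := by
  intro i j hij
  by_contra! hr
  have hne : i ≠ j := fun h => hij.ne (congrArg e h)
  set τ := Equiv.swap i j
  have hX : U * τ.permMatrix ℂ * Uᴴ ∈ unitaryGroup (Fin d) ℂ :=
    mul_mem (mul_mem hU (permMatrix_mem_unitaryGroup τ)) (Unitary.star_mem hU)
  have hconj : U * τ.permMatrix ℂ * Uᴴ * ρ * (U * τ.permMatrix ℂ * Uᴴ)ᴴ
      = U * diagonal (fun k => (r (τ k) : ℂ)) * Uᴴ := by
    have hUU : Uᴴ * U = 1 := mem_unitaryGroup_iff'.mp hU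
    calc _ = U * (τ.permMatrix ℂ * (Uᴴ * U) * diagonal (fun k => (r k : ℂ)) * (Uᴴ * U)
            * (τ.permMatrix ℂ)ᴴ) * Uᴴ := by
          simp only [hρ, conjTranspose_mul, conjTranspose_conjTranspose, Matrix.mul_assoc]
      _ = _ := by
          rw [hUU, mul_one, mul_one, permMatrix_mul_diagonal_mul_conjTranspose]
          rfl
  have hswap : ∑ k, e k * r (τ k) = ∑ k, e k * r k + (e i - e j) * (r j - r i) := by
    rw [← sub_eq_iff_eq_add', ← Finset.sum_sub_distrib,
      Fintype.sum_eq_add i j hne fun k hk => by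
        simp [τ, Equiv.swap_apply_of_ne_of_ne hk.1 hk.2]]
    simp only [τ, Equiv.swap_apply_left, Equiv.swap_apply_right]
    ring
  have h := hmin _ hX
  rw [hconj, hH, hρ, energy_conj hU, energy_conj hU, energy_diagonal_diagonal,
    energy_diagonal_diagonal, hswap] at h
  nlinarith [mul_pos (sub_pos.2 hij) (sub_pos.2 hr)]

end Energy

theorem ergotropy_eq_zero_iff_passive_general {d : ℕ} (H ρ : Matrix (Fin d) (Fin d) ℂ)
    (hH : H.IsHermitian) (hρ : ρ.PosSemidef) :
    ergotropy H ρ = 0 ↔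
      ∃ U ∈ Matrix.unitaryGroup (Fin d) ℂ, ∃ e r : Fin d → ℝ,
        Monotone e ∧ Antitone r ∧
        H = U * Matrix.diagonal (fun i => (e i : ℂ)) * Uᴴ ∧
        ρ = U * Matrix.diagonal (fun i => (r i : ℂ)) * Uᴴ := by
  rw [ergotropy_eq_zero_iff_forall_energy_le hH hρ.1]
  constructor
  · intro hmin
    obtain ⟨U, hU, e, r, hHU, hρU⟩ :=
      hH.exists_unitary_diagonal_of_commute hρ.1 (commute_of_forall_energy_le hH hρ.1 hmin)
    obtain ⟨V, hV, e', r', he', hr', hUV, hUV'⟩ :=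
      exists_unitary_diagonal_monotone_antitone_of_antivary hU
        (antivary_of_forall_energy_le hU hHU hρU hmin)
    exact ⟨V, hV, e', r', he', hr', hHU.trans hUV, hρU.trans hUV'⟩
  · rintro ⟨U, hU, e, r, he, hr, rfl, rfl⟩ X hX
    rw [energy_conj hU, energy_diagonal_diagonal]
    exact (isLeast_energy_orbit hU hU (he.antivary hr) rfl rfl).2 ⟨X, hX, rfl⟩

/-- a density matrix has zero ergotropy iff it is passive, i.e. it is
diagonal in a common eigenbasis with `H`, with populations nonincreasing in energy. -/
theorem ergotropy_eq_zero_iff_passive {d : ℕ} (H ρ : Matrix (Fin d) (Fin d) ℂ)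
    (hH : H.IsHermitian) (hρ : ρ.PosSemidef) (htr : ρ.trace = 1) :
    ergotropy H ρ = 0 ↔
      ∃ U ∈ Matrix.unitaryGroup (Fin d) ℂ, ∃ e r : Fin d → ℝ,
        Monotone e ∧ Antitone r ∧
        H = U * Matrix.diagonal (fun i => (e i : ℂ)) * Uᴴ ∧
        ρ = U * Matrix.diagonal (fun i => (r i : ℂ)) * Uᴴ :=
  ergotropy_eq_zero_iff_passive_general H ρ hH hρ
end

section
/- Daemonic ergotropy is at least the ergotropy of the reduced state: for a bipartite density matrix ρ^{SA} on H_S ⊗ H_A and any POVM {Π_a} on the ancilla A, one has Σ_a p_a E(ρ_a^S) ≥ E(ρ^S), where p_a = Tr[ρ^{SA}(1⊗Π_a)], ρ_a^S = Tr_A[ρ^{SA}(1⊗Π_a)]/p_a (for p_a > 0), and ρ^S = Tr_A ρ^{SA}. -/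
/-!
Measuring the ancilla splits the reduced state as `ρ^S = ∑ₐ pₐ ρₐ^S`. The energy `Tr[Hρ]` is linear
in the state, while the passive energy is an infimum of linear functionals over the unitary orbit,
hence superadditive under nonnegative combinations; so ergotropy is convex. Compactness of the
unitary group keeps the energies on a unitary orbit bounded below, so that `sInf` in
`passiveEnergy` is a true infimum rather than the junk value of an unbounded set.
-/

open Matrix
open scoped ComplexOrder

open Kronecker

/-- Partial trace over the ancilla (second factor). -/
noncomputable def ptraceA {dS dA : ℕ} (M : Matrix (Fin dS × Fin dA) (Fin dS × Fin dA) ℂ) :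
    Matrix (Fin dS) (Fin dS) ℂ :=
  Matrix.of fun i j => ∑ k : Fin dA, M (i, k) (j, k)

/-- Probability of outcome associated to the POVM element `P` on the ancilla. -/
noncomputable def outProb {dS dA : ℕ} (ρSA : Matrix (Fin dS × Fin dA) (Fin dS × Fin dA) ℂ)
    (P : Matrix (Fin dA) (Fin dA) ℂ) : ℝ :=
  (Matrix.trace (ρSA * ((1 : Matrix (Fin dS) (Fin dS) ℂ) ⊗ₖ P))).re

/-- Conditional (normalized) state of the system given the POVM element `P`. -/
noncomputable def condState {dS dA : ℕ} (ρSA : Matrix (Fin dS × Fin dA) (Fin dS × Fin dA) ℂ)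
    (P : Matrix (Fin dA) (Fin dA) ℂ) : Matrix (Fin dS) (Fin dS) ℂ :=
  (outProb ρSA P)⁻¹ • ptraceA (ρSA * ((1 : Matrix (Fin dS) (Fin dS) ℂ) ⊗ₖ P))

section Unitary

variable {n 𝕜 : Type*} [Fintype n] [DecidableEq n] [RCLike 𝕜]

theorem isClosed_unitaryGroup : IsClosed (Matrix.unitaryGroup n 𝕜 : Set (Matrix n n 𝕜)) := by
  have hset : (Matrix.unitaryGroup n 𝕜 : Set (Matrix n n 𝕜)) =
      {U | star U * U = 1} ∩ {U | U * star U = 1} := by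
    ext U; exact Unitary.mem_iff
  rw [hset]
  exact (isClosed_eq (by fun_prop) continuous_const).inter
    (isClosed_eq (by fun_prop) continuous_const)

theorem isCompact_unitaryGroup : IsCompact (Matrix.unitaryGroup n 𝕜 : Set (Matrix n n 𝕜)) := by
  refine (isCompact_univ_pi fun _ => isCompact_univ_pi fun _ =>
    ProperSpace.isCompact_closedBall (0 : 𝕜) 1).of_isClosed_subset isClosed_unitaryGroup ?_
  intro U hU i _ j _
  simpa using entry_norm_bound_of_unitary hU i j

end Unitary

section Ergotropy

variable {d : ℕ} (H : Matrix (Fin d) (Fin d) ℂ)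

lemma energy_sum_smul {ι : Type*} [Fintype ι] (p : ι → ℝ) (ρ : ι → Matrix (Fin d) (Fin d) ℂ) :
    energy H (∑ a, p a • ρ a) = ∑ a, p a * energy H (ρ a) := by
  simp [energy, Finset.mul_sum, Complex.re_sum]

lemma bddBelow_energy_conj (ρ : Matrix (Fin d) (Fin d) ℂ) :
    BddBelow {x : ℝ | ∃ U ∈ Matrix.unitaryGroup (Fin d) ℂ, x = energy H (U * ρ * Uᴴ)} := by
  have hcont : Continuous fun U : Matrix (Fin d) (Fin d) ℂ => energy H (U * ρ * Uᴴ) := by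
    unfold energy; fun_prop
  obtain ⟨c, hc⟩ := (isCompact_unitaryGroup.image hcont).bddBelow
  exact ⟨c, fun x ⟨U, hU, hx⟩ => hx ▸ hc ⟨U, hU, rfl⟩⟩

lemma passiveEnergy_le_energy_conj (ρ : Matrix (Fin d) (Fin d) ℂ) {U : Matrix (Fin d) (Fin d) ℂ}
    (hU : U ∈ Matrix.unitaryGroup (Fin d) ℂ) : passiveEnergy H ρ ≤ energy H (U * ρ * Uᴴ) :=
  csInf_le (bddBelow_energy_conj H ρ) ⟨U, hU, rfl⟩

lemma le_passiveEnergy {ρ : Matrix (Fin d) (Fin d) ℂ} {c : ℝ}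
    (h : ∀ U ∈ Matrix.unitaryGroup (Fin d) ℂ, c ≤ energy H (U * ρ * Uᴴ)) :
    c ≤ passiveEnergy H ρ :=
  le_csInf ⟨_, 1, one_mem _, rfl⟩ fun _ ⟨U, hU, hx⟩ => hx ▸ h U hU

lemma sum_mul_passiveEnergy_le {ι : Type*} [Fintype ι] {p : ι → ℝ} (hp : ∀ a, 0 ≤ p a)
    (ρ : ι → Matrix (Fin d) (Fin d) ℂ) :
    ∑ a, p a * passiveEnergy H (ρ a) ≤ passiveEnergy H (∑ a, p a • ρ a) := by
  refine le_passiveEnergy H fun U hU => ?_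
  have hconj : U * (∑ a, p a • ρ a) * Uᴴ = ∑ a, p a • (U * ρ a * Uᴴ) := by
    simp [Finset.mul_sum, Finset.sum_mul]
  rw [hconj, energy_sum_smul]
  exact Finset.sum_le_sum fun a _ =>
    mul_le_mul_of_nonneg_left (passiveEnergy_le_energy_conj H (ρ a) hU) (hp a)

theorem ergotropy_sum_smul_le {ι : Type*} [Fintype ι] {p : ι → ℝ} (hp : ∀ a, 0 ≤ p a)
    (ρ : ι → Matrix (Fin d) (Fin d) ℂ) :
    ergotropy H (∑ a, p a • ρ a) ≤ ∑ a, p a * ergotropy H (ρ a) := by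
  simp only [ergotropy, mul_sub, Finset.sum_sub_distrib, energy_sum_smul]
  exact sub_le_sub_left (sum_mul_passiveEnergy_le H hp ρ) _

end Ergotropy

section PartialTrace

variable {dS dA : ℕ}

lemma ptraceA_eq_sum_submatrix (M : Matrix (Fin dS × Fin dA) (Fin dS × Fin dA) ℂ) :
    ptraceA M = ∑ k, M.submatrix (·, k) (·, k) := by
  ext i j
  simp [ptraceA, Matrix.sum_apply]

lemma Matrix.PosSemidef.ptraceA {M : Matrix (Fin dS × Fin dA) (Fin dS × Fin dA) ℂ}
    (hM : M.PosSemidef) : (ptraceA M).PosSemidef := by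
  rw [ptraceA_eq_sum_submatrix]
  exact posSemidef_sum _ fun k _ => hM.submatrix _

lemma ptraceA_sum {ι : Type*} [Fintype ι] (M : ι → Matrix (Fin dS × Fin dA) (Fin dS × Fin dA) ℂ) :
    ptraceA (∑ a, M a) = ∑ a, ptraceA (M a) := by
  ext i j
  simp only [ptraceA, Matrix.of_apply, Matrix.sum_apply]
  exact Finset.sum_comm

lemma trace_ptraceA (M : Matrix (Fin dS × Fin dA) (Fin dS × Fin dA) ℂ) :
    (ptraceA M).trace = M.trace := by
  simp [ptraceA, Matrix.trace, Fintype.sum_prod_type]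

lemma ptraceA_mul_one_kronecker (M : Matrix (Fin dS × Fin dA) (Fin dS × Fin dA) ℂ)
    (X : Matrix (Fin dA) (Fin dA) ℂ) :
    ptraceA (M * ((1 : Matrix (Fin dS) (Fin dS) ℂ) ⊗ₖ X))
      = ptraceA (((1 : Matrix (Fin dS) (Fin dS) ℂ) ⊗ₖ X) * M) := by
  ext i j
  simp only [ptraceA, of_apply, Matrix.mul_apply, kroneckerMap_apply, Matrix.one_apply, ite_mul,
    one_mul, zero_mul, mul_ite, mul_zero, Fintype.sum_prod_type, Finset.sum_ite_irrel,
    Finset.sum_const_zero, Finset.sum_ite_eq, Finset.sum_ite_eq', Finset.mem_univ, ↓reduceIte]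
  rw [Finset.sum_comm]
  exact Finset.sum_congr rfl fun _ _ => Finset.sum_congr rfl fun _ _ => mul_comm _ _

end PartialTrace

section Measurement

variable {dS dA : ℕ} {ρSA : Matrix (Fin dS × Fin dA) (Fin dS × Fin dA) ℂ}
  {P : Matrix (Fin dA) (Fin dA) ℂ}

lemma posSemidef_ptraceA_mul_one_kronecker (hρ : ρSA.PosSemidef) (hP : P.PosSemidef) :
    (ptraceA (ρSA * ((1 : Matrix (Fin dS) (Fin dS) ℂ) ⊗ₖ P))).PosSemidef := by
  open scoped MatrixOrder in
  obtain ⟨b, rfl⟩ := CStarAlgebra.nonneg_iff_eq_star_mul_self.mp hP.nonneg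
  have hfactor : (1 : Matrix (Fin dS) (Fin dS) ℂ) ⊗ₖ (star b * b) =
      ((1 : Matrix (Fin dS) (Fin dS) ℂ) ⊗ₖ b)ᴴ * ((1 : Matrix (Fin dS) (Fin dS) ℂ) ⊗ₖ b) := by
    rw [conjTranspose_kronecker, conjTranspose_one, ← mul_kronecker_mul, one_mul,
      star_eq_conjTranspose]
  rw [hfactor, ← mul_assoc, ptraceA_mul_one_kronecker, ← mul_assoc]
  exact (hρ.mul_mul_conjTranspose_same _).ptraceA

lemma outProb_eq_re_trace_ptraceA :
    outProb ρSA P = (ptraceA (ρSA * ((1 : Matrix (Fin dS) (Fin dS) ℂ) ⊗ₖ P))).trace.re := by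
  rw [outProb, trace_ptraceA]

lemma outProb_nonneg (hρ : ρSA.PosSemidef) (hP : P.PosSemidef) : 0 ≤ outProb ρSA P := by
  rw [outProb_eq_re_trace_ptraceA]
  exact (Complex.nonneg_iff.mp (posSemidef_ptraceA_mul_one_kronecker hρ hP).trace_nonneg).1

lemma ptraceA_mul_one_kronecker_eq_smul_condState (hρ : ρSA.PosSemidef) (hP : P.PosSemidef) :
    ptraceA (ρSA * ((1 : Matrix (Fin dS) (Fin dS) ℂ) ⊗ₖ P)) =
      outProb ρSA P • condState ρSA P := by
  by_cases hp : outProb ρSA P = 0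
  -- `condState` is the junk `0⁻¹ • _` here; the left side vanishes too, being PSD of trace zero.
  · have hσ := posSemidef_ptraceA_mul_one_kronecker hρ hP
    have htrace : (ptraceA (ρSA * ((1 : Matrix (Fin dS) (Fin dS) ℂ) ⊗ₖ P))).trace = 0 :=
      Complex.ext (outProb_eq_re_trace_ptraceA ▸ hp)
        (Complex.nonneg_iff.mp hσ.trace_nonneg).2.symm
    rw [hp, zero_smul, ← hσ.trace_eq_zero_iff, htrace]
  · rw [condState, smul_smul, mul_inv_cancel₀ hp, one_smul]

end Measurement

theorem daemonic_ergotropy_ge_ergotropy_general {dS dA n : ℕ}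
    (H : Matrix (Fin dS) (Fin dS) ℂ)
    (ρSA : Matrix (Fin dS × Fin dA) (Fin dS × Fin dA) ℂ)
    (hρ : ρSA.PosSemidef)
    (Pov : Fin n → Matrix (Fin dA) (Fin dA) ℂ)
    (hPovpos : ∀ a, (Pov a).PosSemidef) (hPovsum : ∑ a, Pov a = 1) :
    ergotropy H (ptraceA ρSA) ≤ ∑ a, outProb ρSA (Pov a) * ergotropy H (condState ρSA (Pov a)) := by
  have hdecomp : ptraceA ρSA = ∑ a, outProb ρSA (Pov a) • condState ρSA (Pov a) :=
    calc ptraceA ρSA = ptraceA (ρSA * ((1 : Matrix (Fin dS) (Fin dS) ℂ) ⊗ₖ ∑ a, Pov a)) := by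
          rw [hPovsum, one_kronecker_one, mul_one]
      _ = ∑ a, ptraceA (ρSA * ((1 : Matrix (Fin dS) (Fin dS) ℂ) ⊗ₖ Pov a)) := by
          rw [← ptraceA_sum, ← Finset.mul_sum]
          congr 2
          exact map_sum (kroneckerBilinear (R := ℂ) (1 : Matrix (Fin dS) (Fin dS) ℂ)) _ _
      _ = ∑ a, outProb ρSA (Pov a) • condState ρSA (Pov a) :=
          Finset.sum_congr rfl fun a _ =>
            ptraceA_mul_one_kronecker_eq_smul_condState hρ (hPovpos a)
  rw [hdecomp]
  exact ergotropy_sum_smul_le H (fun a => outProb_nonneg hρ (hPovpos a)) _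

/-- the daemonic ergotropy is at least the ergotropy of the reduced state. -/
theorem daemonic_ergotropy_ge_ergotropy {dS dA n : ℕ}
    (H : Matrix (Fin dS) (Fin dS) ℂ) (hH : H.IsHermitian)
    (ρSA : Matrix (Fin dS × Fin dA) (Fin dS × Fin dA) ℂ)
    (hρ : ρSA.PosSemidef) (htr : ρSA.trace = 1)
    (Pov : Fin n → Matrix (Fin dA) (Fin dA) ℂ)
    (hPovpos : ∀ a, (Pov a).PosSemidef) (hPovsum : ∑ a, Pov a = 1) :
    ergotropy H (ptraceA ρSA) ≤ ∑ a, outProb ρSA (Pov a) * ergotropy H (condState ρSA (Pov a)) :=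
  daemonic_ergotropy_ge_ergotropy_general H ρSA hρ Pov hPovpos hPovsum
end

section
/- For a qubit with Hamiltonian H_0 = (ω_0/2)(σ_z + I), the ergotropy of any qubit state ρ satisfies E(ρ) = Tr[H_0 ρ] − (ω_0/2)(1 − √(2μ(ρ) − 1)), where μ(ρ) = Tr[ρ²] is the purity; equivalently E(ρ) = E(ρ) − ω_0/2 + (ω_0/2)√(2μ(ρ)−1) with E(ρ) the energy. -/
open Matrix
open scoped ComplexOrder

/-- Pauli matrices. -/
noncomputable def sigmaX : Matrix (Fin 2) (Fin 2) ℂ := !![0, 1; 1, 0]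
noncomputable def sigmaY : Matrix (Fin 2) (Fin 2) ℂ := !![0, -Complex.I; Complex.I, 0]
noncomputable def sigmaZ : Matrix (Fin 2) (Fin 2) ℂ := !![1, 0; 0, -1]

/-- Lowering operator `σ₋ = |g⟩⟨e|`. -/
noncomputable def sigmaMinus : Matrix (Fin 2) (Fin 2) ℂ := !![0, 0; 1, 0]

/-- Qubit Hamiltonian `H₀ = (ω₀/2)(σ_z + 1)`. -/
noncomputable def qubitH (ω₀ : ℝ) : Matrix (Fin 2) (Fin 2) ℂ :=
  (ω₀ / 2) • (sigmaZ + 1)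

/-- Purity `μ(ρ) = Tr[ρ²]`. -/
noncomputable def purity (ρ : Matrix (Fin 2) (Fin 2) ℂ) : ℝ :=
  (Matrix.trace (ρ * ρ)).re

/-! Diagonalising ρ by its eigenvector unitary does not change its passive energy, so it suffices to
treat `diag(λ₀, λ₁)`. Conjugating that by a unitary `U` gives energy `ω₀ (λ₀ |U₀₀|² + λ₁ |U₀₁|²)`,
a convex combination of `ω₀ λ₀` and `ω₀ λ₁`, both attained (by `1` and by `σₓ`); so for `ω₀ ≥ 0`
the passive energy is `ω₀ min(λ₀, λ₁)`. With `λ₀ + λ₁ = 1` and `μ(ρ) = λ₀² + λ₁²` one gets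
`2μ(ρ) − 1 = (λ₀ − λ₁)²` and `min(λ₀, λ₁) = (1 − |λ₀ − λ₁|)/2`. -/

open Unitary

namespace Matrix

variable {n : Type*} [Fintype n] [DecidableEq n]

lemma trace_conjStarAlgAut {R : Type*} [CommRing R] [StarRing R] (u : unitary (Matrix n n R))
    (A : Matrix n n R) : (conjStarAlgAut R _ u A).trace = A.trace := by
  rw [conjStarAlgAut_apply, trace_mul_cycle, Unitary.coe_star_mul_self, one_mul]

lemma IsHermitian.trace_mul_self_eq_sum_sq {A : Matrix n n ℂ} (hA : A.IsHermitian) :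
    (A * A).trace = ∑ i, (hA.eigenvalues i : ℂ) ^ 2 := by
  conv_lhs => rw [hA.spectral_theorem]
  rw [← map_mul, trace_conjStarAlgAut, diagonal_mul_diagonal, trace_diagonal]
  simp [sq]

lemma re_mul_diagonal_mul_conjTranspose_apply_self (U : Matrix n n ℂ) (l : n → ℝ) (i : n) :
    ((U * diagonal (RCLike.ofReal ∘ l) * Uᴴ : Matrix n n ℂ) i i).re =
      ∑ j, l j * Complex.normSq (U i j) := by
  rw [mul_apply, Complex.re_sum]
  refine Finset.sum_congr rfl fun j _ => ?_
  rw [mul_diagonal, conjTranspose_apply, Function.comp_apply, mul_right_comm, RCLike.star_def,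
    Complex.mul_conj]
  simp [mul_comm]

lemma sum_normSq_apply_eq_one_of_mem_unitaryGroup {U : Matrix n n ℂ}
    (hU : U ∈ unitaryGroup n ℂ) (i : n) : ∑ j, Complex.normSq (U i j) = 1 := by
  have hdiag := congrFun (congrFun (mem_unitaryGroup_iff.mp hU) i) i
  simp only [mul_apply, star_apply, RCLike.star_def, Complex.mul_conj, one_apply_eq] at hdiag
  exact_mod_cast hdiag

end Matrix

lemma passiveEnergy_conjStarAlgAut {d : ℕ} (H ρ : Matrix (Fin d) (Fin d) ℂ)
    (u : unitaryGroup (Fin d) ℂ) :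
    passiveEnergy H (conjStarAlgAut ℂ _ u ρ) = passiveEnergy H ρ := by
  unfold passiveEnergy
  congr 1
  ext x
  simp only [conjStarAlgAut_apply, Set.mem_ofPred_eq]
  constructor
  · rintro ⟨V, hV, rfl⟩
    refine ⟨V * u, mul_mem hV u.2, ?_⟩
    simp [conjTranspose_mul, star_eq_conjTranspose, mul_assoc]
  · rintro ⟨W, hW, rfl⟩
    refine ⟨W * star (u : Matrix (Fin d) (Fin d) ℂ), mul_mem hW (star_mem u.2), ?_⟩
    have hu (X : Matrix (Fin d) (Fin d) ℂ) : star (u : Matrix (Fin d) (Fin d) ℂ) * (u * X) = X := by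
      rw [← mul_assoc, Unitary.coe_star_mul_self, one_mul]
    simp [← star_eq_conjTranspose, mul_assoc, hu]

lemma Matrix.IsHermitian.passiveEnergy_eq_passiveEnergy_diagonal {d : ℕ}
    (H : Matrix (Fin d) (Fin d) ℂ) {ρ : Matrix (Fin d) (Fin d) ℂ} (hρ : ρ.IsHermitian) :
    passiveEnergy H ρ = passiveEnergy H (diagonal (RCLike.ofReal ∘ hρ.eigenvalues)) := by
  conv_lhs => rw [hρ.spectral_theorem]
  exact passiveEnergy_conjStarAlgAut _ _ _

lemma energy_qubitH (ω₀ : ℝ) (A : Matrix (Fin 2) (Fin 2) ℂ) :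
    energy (qubitH ω₀) A = ω₀ * (A 0 0).re := by
  simp [energy, qubitH, sigmaZ, trace, mul_apply, Fin.sum_univ_two, one_apply]

lemma sigmaX_mem_unitaryGroup : sigmaX ∈ unitaryGroup (Fin 2) ℂ := by
  rw [mem_unitaryGroup_iff]
  ext i j
  fin_cases i <;> fin_cases j <;> simp [sigmaX, mul_apply, Fin.sum_univ_two]

lemma passiveEnergy_qubitH_diagonal {ω₀ : ℝ} (hω : 0 ≤ ω₀) (l : Fin 2 → ℝ) :
    passiveEnergy (qubitH ω₀) (diagonal (RCLike.ofReal ∘ l)) = ω₀ * min (l 0) (l 1) := by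
  have henergy (U : Matrix (Fin 2) (Fin 2) ℂ) :
      energy (qubitH ω₀) (U * diagonal (RCLike.ofReal ∘ l) * Uᴴ) =
        ω₀ * (l 0 * Complex.normSq (U 0 0) + l 1 * Complex.normSq (U 0 1)) := by
    rw [energy_qubitH, re_mul_diagonal_mul_conjTranspose_apply_self, Fin.sum_univ_two]
  refine IsLeast.csInf_eq ⟨?_, ?_⟩
  · rcases min_choice (l 0) (l 1) with hmin | hmin <;> rw [hmin]
    · exact ⟨1, one_mem _, by rw [henergy]; simp⟩
    · exact ⟨sigmaX, sigmaX_mem_unitaryGroup, by rw [henergy]; simp [sigmaX]⟩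
  · rintro _ ⟨U, hU, rfl⟩
    have hrow := sum_normSq_apply_eq_one_of_mem_unitaryGroup hU 0
    rw [Fin.sum_univ_two] at hrow
    rw [henergy]
    gcongr
    linear_combination
      mul_nonneg (Complex.normSq_nonneg (U 0 0)) (sub_nonneg.2 (min_le_left (l 0) (l 1))) +
      mul_nonneg (Complex.normSq_nonneg (U 0 1)) (sub_nonneg.2 (min_le_right (l 0) (l 1))) +
      (-min (l 0) (l 1)) * hrow

/-- closed-form qubit ergotropy in terms of energy and purity. -/
theorem qubit_ergotropy_formula (ω₀ : ℝ) (hω : 0 < ω₀)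
    (ρ : Matrix (Fin 2) (Fin 2) ℂ) (hρ : ρ.PosSemidef) (htr : ρ.trace = 1) :
    ergotropy (qubitH ω₀) ρ =
      energy (qubitH ω₀) ρ - (ω₀ / 2) * (1 - Real.sqrt (2 * purity ρ - 1)) := by
  have hH := hρ.isHermitian
  set l := hH.eigenvalues
  have htrace : l 0 + l 1 = 1 := by
    have := congrArg Complex.re hH.trace_eq_sum_eigenvalues
    simpa [htr, Fin.sum_univ_two, l] using this.symm
  have hpurity : purity ρ = l 0 ^ 2 + l 1 ^ 2 := by
    rw [purity, hH.trace_mul_self_eq_sum_sq, Fin.sum_univ_two]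
    norm_cast
  have hgap : √(2 * purity ρ - 1) = |l 1 - l 0| := by
    rw [hpurity, ← Real.sqrt_sq_eq_abs]
    congr 1
    linear_combination (l 0 + l 1 + 1) * htrace
  rw [ergotropy, hH.passiveEnergy_eq_passiveEnergy_diagonal,
    passiveEnergy_qubitH_diagonal hω.le, hgap, inf_eq_half_smul_add_sub_abs_sub' ℝ, htrace,
    smul_eq_mul]
  ring
end

section
/- The function f(x) = (√(16x² + 1) − 1)/(8x² + 1) for x ≥ 0 (the steady-state ergotropy 2𝓔_ss/(ω_0κ) as a function of x = α/κ) attains its maximum at x* = √((1+√2)/8), with maximum value f(x*) = √2 − 1. -/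
/-- the normalized steady-state ergotropy
`f(x) = (√(16x² + 1) − 1)/(8x² + 1)` attains its maximum over `x ≥ 0` at
`x* = √((1 + √2)/8)`, with maximum value `√2 − 1`. -/
theorem ergotropy_profile_max :
    (Real.sqrt (16 * Real.sqrt ((1 + Real.sqrt 2) / 8) ^ 2 + 1) - 1) /
        (8 * Real.sqrt ((1 + Real.sqrt 2) / 8) ^ 2 + 1) = Real.sqrt 2 - 1 ∧
    ∀ x : ℝ, 0 ≤ x →
      (Real.sqrt (16 * x ^ 2 + 1) - 1) / (8 * x ^ 2 + 1) ≤ Real.sqrt 2 - 1 := by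
  have h2 : Real.sqrt 2 ^ 2 = 2 := Real.sq_sqrt (by norm_num)
  have h2pos : (1:ℝ) < Real.sqrt 2 := by
    nlinarith [Real.sqrt_nonneg 2]
  constructor
  · have hxsq : Real.sqrt ((1 + Real.sqrt 2) / 8) ^ 2 = (1 + Real.sqrt 2) / 8 :=
      Real.sq_sqrt (by positivity)
    rw [hxsq]
    have h3 : 16 * ((1 + Real.sqrt 2) / 8) + 1 = (1 + Real.sqrt 2) ^ 2 := by
      nlinarith
    rw [h3, Real.sqrt_sq (by positivity)]
    have hd : 8 * ((1 + Real.sqrt 2) / 8) + 1 = 2 + Real.sqrt 2 := by ring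
    rw [hd]
    field_simp
    nlinarith
  · intro x hx
    set s := Real.sqrt (16 * x ^ 2 + 1) with hs
    have hssq : s ^ 2 = 16 * x ^ 2 + 1 := Real.sq_sqrt (by positivity)
    have hsnn : 0 ≤ s := Real.sqrt_nonneg _
    have hdpos : (0:ℝ) < 8 * x ^ 2 + 1 := by positivity
    rw [div_le_iff₀ hdpos]
    nlinarith [sq_nonneg (s - (1 + Real.sqrt 2)), sq_nonneg x]
end
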